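/- arXiv:2312.12709 — 4 statements merged into one kernel-verified Lean document; each statement's English description precedes it below -/
import Mathlib

section
/- Let φ: K → M be a strong covering of abstract simplicial complexes. Then for every i-face G of M and every i-face F in the preimage φ⁻¹(G), the map φ restricts to a bijection from the set of (i+1)-faces of K containing F (in their boundary) to the set of (i+1)-faces of M containing G (in their boundary). -/
open Finset

variable {V : Type*} {W : Type*}

/-- An abstract simplicial complex: a collection of finite subsets of `V`
closed under taking subsets. -/
def IsComplex [DecidableEq V] (K : Finset (Finset V)) : Prop :=
  ∀ F ∈ K, ∀ G, G ⊆ F → G ∈ K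

/-- The 1-skeleton graph of a complex. -/
def oneSkeleton [DecidableEq V] (K : Finset (Finset V)) : SimpleGraph V where
  Adj u v := u ≠ v ∧ ({u, v} : Finset V) ∈ K
  symm := ⟨fun u v h => ⟨h.1.symm, by rw [Finset.pair_comm]; exact h.2⟩⟩
  loopless := ⟨fun u h => h.1 rfl⟩

/-- A strong covering of simplicial complexes `φ : K → M`:
`K` is a connected complex, `φ` is simplicial, the preimage of each face of `M`
is a disjoint union of faces of `K` each mapped bijectively onto it, and
incidences lift: whenever `G ∈ ∂ Gb` in `M` and `F ∈ φ⁻¹(G)`, there is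
`Fb` of `K` with `F ∈ ∂ Fb` and `φ(Fb) = Gb`. -/
structure StrongCovering [DecidableEq V] [DecidableEq W]
    (K : Finset (Finset V)) (M : Finset (Finset W)) (φ : V → W) : Prop where
  complexK : IsComplex K
  complexM : IsComplex M
  nonemptyK : K.Nonempty
  connectedK : ∀ u v : V, {u} ∈ K → {v} ∈ K → (oneSkeleton K).Reachable u v
  simplicial : ∀ F ∈ K, F.image φ ∈ M
  injOn : ∀ F ∈ K, Set.InjOn φ (F : Set V)
  disjointFibers : ∀ F ∈ K, ∀ F' ∈ K, F.image φ = F'.image φ → F ≠ F' → Disjoint F F'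
  surjFaces : ∀ G ∈ M, ∃ F ∈ K, F.image φ = G
  strong : ∀ G ∈ M, ∀ Gb ∈ M, G ⊆ Gb → Gb.card = G.card + 1 →
    ∀ F ∈ K, F.image φ = G → ∃ Fb ∈ K, F ⊆ Fb ∧ Fb.card = F.card + 1 ∧ Fb.image φ = Gb

namespace StrongCovering

variable [DecidableEq V] [DecidableEq W] {K : Finset (Finset V)} {M : Finset (Finset W)}
  {φ : V → W} {F Fb Fb' : Finset V}

theorem card_image (hc : StrongCovering K M φ) (hF : F ∈ K) : (F.image φ).card = F.card :=
  card_image_of_injOn (hc.injOn F hF)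

theorem eq_of_image_eq_of_mem (hc : StrongCovering K M φ) (hFb : Fb ∈ K) (hFb' : Fb' ∈ K)
    (him : Fb.image φ = Fb'.image φ) {x : V} (hx : x ∈ Fb) (hx' : x ∈ Fb') : Fb = Fb' := by
  by_contra hne
  exact disjoint_left.mp (hc.disjointFibers Fb hFb Fb' hFb' him hne) hx hx'

theorem mapsTo_cofaces (hc : StrongCovering K M φ) (n : ℕ) :
    Set.MapsTo (fun Fb => Fb.image φ) {Fb | Fb ∈ K ∧ F ⊆ Fb ∧ Fb.card = n}
      {Gb | Gb ∈ M ∧ F.image φ ⊆ Gb ∧ Gb.card = n} := by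
  rintro Fb ⟨hFb, hsub, hcard⟩
  exact ⟨hc.simplicial Fb hFb, image_subset_image hsub, hcard ▸ hc.card_image hFb⟩

theorem injOn_supersets (hc : StrongCovering K M φ) (hF : F.Nonempty) :
    Set.InjOn (fun Fb => Fb.image φ) {Fb | Fb ∈ K ∧ F ⊆ Fb} := by
  obtain ⟨x, hx⟩ := hF
  rintro Fb ⟨hFb, hsub⟩ Fb' ⟨hFb', hsub'⟩ him
  exact hc.eq_of_image_eq_of_mem hFb hFb' him (hsub hx) (hsub' hx)

theorem surjOn_cofaces (hc : StrongCovering K M φ) (hF : F ∈ K) :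
    Set.SurjOn (fun Fb => Fb.image φ) {Fb | Fb ∈ K ∧ F ⊆ Fb ∧ Fb.card = F.card + 1}
      {Gb | Gb ∈ M ∧ F.image φ ⊆ Gb ∧ Gb.card = F.card + 1} := by
  rintro Gb ⟨hGb, hsub, hcard⟩
  obtain ⟨Fb, hFb, hFFb, hFbcard, him⟩ :=
    hc.strong _ (hc.simplicial F hF) Gb hGb hsub (by rw [hcard, hc.card_image hF]) F hF rfl
  exact ⟨Fb, ⟨hFb, hFFb, hFbcard⟩, him⟩

theorem bijOn_cofaces (hc : StrongCovering K M φ) (hF : F ∈ K) (hne : F.Nonempty) :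
    Set.BijOn (fun Fb => Fb.image φ) {Fb | Fb ∈ K ∧ F ⊆ Fb ∧ Fb.card = F.card + 1}
      {Gb | Gb ∈ M ∧ F.image φ ⊆ Gb ∧ Gb.card = F.card + 1} :=
  ⟨hc.mapsTo_cofaces _, (hc.injOn_supersets hne).mono fun _ h => And.intro h.1 h.2.1,
    hc.surjOn_cofaces hF⟩

end StrongCovering

theorem strongCovering_bijOn_cofaces_general [DecidableEq V] [DecidableEq W]
    (K : Finset (Finset V)) (M : Finset (Finset W)) (φ : V → W)
    (hc : StrongCovering K M φ) (i : ℕ)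
    (G : Finset W) (hGcard : G.card = i + 1)
    (F : Finset V) (hF : F ∈ K) (hFG : F.image φ = G) :
    Set.BijOn (fun Fb => Fb.image φ)
      {Fb : Finset V | Fb ∈ K ∧ F ⊆ Fb ∧ Fb.card = i + 2}
      {Gb : Finset W | Gb ∈ M ∧ G ⊆ Gb ∧ Gb.card = i + 2} := by
  subst hFG
  have hFcard : F.card = i + 1 := hc.card_image hF ▸ hGcard
  rw [show i + 2 = F.card + 1 by omega]
  exact hc.bijOn_cofaces hF (card_pos.mp (by omega))

/-- for a strong covering `φ : K → M`, for every `i`-face `G` of `M`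
and every `F ∈ φ⁻¹(G)`, the map `φ` restricts to a bijection from the set of
`(i+1)`-faces of `K` containing `F` in their boundary onto the set of
`(i+1)`-faces of `M` containing `G` in their boundary. -/
theorem strongCovering_bijOn_cofaces [DecidableEq V] [DecidableEq W]
    (K : Finset (Finset V)) (M : Finset (Finset W)) (φ : V → W)
    (hc : StrongCovering K M φ) (i : ℕ)
    (G : Finset W) (hG : G ∈ M) (hGcard : G.card = i + 1)
    (F : Finset V) (hF : F ∈ K) (hFG : F.image φ = G) :
    Set.BijOn (fun Fb => Fb.image φ)
      {Fb : Finset V | Fb ∈ K ∧ F ⊆ Fb ∧ Fb.card = i + 2}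
      {Gb : Finset W | Gb ∈ M ∧ G ⊆ Gb ∧ Gb.card = i + 2} :=
  strongCovering_bijOn_cofaces_general K M φ hc i G hGcard F hF hFG
end

section
/- Let W₁ be an n × n positive diagonal matrix, W₂ an m × m positive diagonal matrix, D an m × n real matrix, and P an orthogonal k × k permutation matrix construction as follows: suppose D^ψ := Σ_{g ∈ G} D^g ⊗ P^g where {D^g}_{g∈G} are m × n matrices with D = Σ_g D^g, G ≤ S_k, and P^g is the permutation matrix of g. Then the trivial-representation block of (W₁ ⊗ I_k)⁻¹ (D^ψ)ᵀ (W₂ ⊗ I_k) D^ψ, obtained by conjugating with I ⊗ T where T⁻¹P^gT = I₁ ⊕ ρ₂(g) ⊕ ⋯ ⊕ ρ_t(g) for all g, equals W₁⁻¹ Dᵀ W₂ D. -/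
open Matrix Kronecker

/-- The permutation matrix of `g ∈ S_k` (complex entries). -/
def permMat (k : ℕ) (g : Equiv.Perm (Fin k)) : Matrix (Fin k) (Fin k) ℂ :=
  fun i j => if i = g j then 1 else 0

/-!
Conjugating by `I ⊗ T` acts only on the right Kronecker factor, and the products
`(P^g)ᵀ P^h = P^(g⁻¹h)` all have trivial-block entry `1`. So after expanding the two sums in
`D^ψ`, the trivial block of the derived matrix is `∑_{g,h} W₁⁻¹ (D^g)ᵀ W₂ D^h`, which collapses
to `W₁⁻¹ Dᵀ W₂ D` because `D = ∑_g D^g`.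
-/

theorem permMat_transpose (k : ℕ) (g : Equiv.Perm (Fin k)) :
    (permMat k g)ᵀ = permMat k g⁻¹ := by
  ext i j
  simp only [transpose_apply, permMat, Equiv.Perm.inv_def, Equiv.eq_symm_apply, eq_comm]

theorem permMat_mul (k : ℕ) (g h : Equiv.Perm (Fin k)) :
    permMat k g * permMat k h = permMat k (g * h) := by
  ext i j
  simp only [mul_apply, permMat, mul_ite, mul_one, mul_zero, Finset.sum_ite_eq', Finset.mem_univ,
    ↓reduceIte, Equiv.Perm.coe_mul, Function.comp_apply]
  congr

theorem permMat_transpose_mul (k : ℕ) (g h : Equiv.Perm (Fin k)) :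
    (permMat k g)ᵀ * permMat k h = permMat k (g⁻¹ * h) := by
  rw [permMat_transpose, permMat_mul]

namespace Matrix

theorem map_inv {n K L : Type*} [Fintype n] [DecidableEq n] [Field K] [Field L]
    (f : K →+* L) (A : Matrix n n K) : A⁻¹.map f = (A.map f)⁻¹ := by
  have hdet : (A.map f).det = f A.det := (f.map_det A).symm
  have hadj : (A.map f).adjugate = A.adjugate.map f := (f.map_adjugate A).symm
  rw [inv_def, inv_def, hdet, hadj, Ring.inverse_eq_inv', Ring.inverse_eq_inv', ← map_inv₀ f]
  ext i j
  simp

section Kronecker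

variable {R ι κ l m n o p : Type*} [CommSemiring R] [Fintype ι] [Fintype κ]

theorem kronecker_one_mul_sum_kronecker_transpose_mul_sum_kronecker [Fintype m] [Fintype n]
    [Fintype p] [DecidableEq p] (V : Matrix l n R) (A : ι → Matrix m n R) (P : ι → Matrix p p R)
    (W : Matrix m m R) (B : κ → Matrix m o R) (Q : κ → Matrix p p R) :
    (V ⊗ₖ (1 : Matrix p p R)) * (∑ i, A i ⊗ₖ P i)ᵀ * (W ⊗ₖ (1 : Matrix p p R)) *
        (∑ j, B j ⊗ₖ Q j) =
      ∑ ij : ι × κ, (V * (A ij.1)ᵀ * W * B ij.2) ⊗ₖ ((P ij.1)ᵀ * Q ij.2) := by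
  simp only [transpose_sum, ← kroneckerMap_transpose, Fintype.sum_prod_type, Matrix.mul_sum,
    Matrix.sum_mul, ← mul_kronecker_mul, Matrix.one_mul, Matrix.mul_one]
  exact Finset.sum_comm

theorem sum_prod_mul_transpose_mul [Fintype m] [Fintype n] (V : Matrix l n R)
    (A : ι → Matrix m n R) (W : Matrix m m R) (B : κ → Matrix m o R) :
    ∑ ij : ι × κ, V * (A ij.1)ᵀ * W * B ij.2 = V * (∑ i, A i)ᵀ * W * ∑ j, B j := by
  simp only [transpose_sum, Fintype.sum_prod_type, Matrix.mul_sum, Matrix.sum_mul]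
  exact Finset.sum_comm

theorem one_kronecker_mul_sum_kronecker_mul_one_kronecker [Fintype l] [DecidableEq l]
    [Fintype o] [DecidableEq o] [Fintype p]
    (S : Matrix p p R) (X : ι → Matrix l o R) (Y : ι → Matrix p p R) (T : Matrix p p R) :
    ((1 : Matrix l l R) ⊗ₖ S) * (∑ i, X i ⊗ₖ Y i) * ((1 : Matrix o o R) ⊗ₖ T) =
      ∑ i, X i ⊗ₖ (S * Y i * T) := by
  simp only [Matrix.mul_sum, Matrix.sum_mul, ← mul_kronecker_mul, Matrix.one_mul, Matrix.mul_one]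

theorem sum_kronecker_apply_of_apply_eq_one (X : ι → Matrix l o R) (Y : ι → Matrix p p R)
    (x : p) (hY : ∀ i, Y i x x = 1) (a : l) (b : o) :
    (∑ i, X i ⊗ₖ Y i) (a, x) (b, x) = (∑ i, X i : Matrix l o R) a b := by
  simp [sum_apply, hY]

end Kronecker

end Matrix

theorem trivial_block_of_derived_laplacian_general {m n k : ℕ} (hk : 0 < k)
    (G : Subgroup (Equiv.Perm (Fin k))) [Fintype ↥G]
    (Dg : G → Matrix (Fin m) (Fin n) ℝ)
    (D : Matrix (Fin m) (Fin n) ℝ) (hD : D = ∑ g : G, Dg g)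
    (w₁ : Fin n → ℝ) (w₂ : Fin m → ℝ)
    (T T' : Matrix (Fin k) (Fin k) ℂ)
    (hblock : ∀ g : G,
      (T' * permMat k g * T) ⟨0, hk⟩ ⟨0, hk⟩ = 1 ∧
      ∀ x : Fin k, x ≠ ⟨0, hk⟩ →
        (T' * permMat k g * T) x ⟨0, hk⟩ = 0 ∧ (T' * permMat k g * T) ⟨0, hk⟩ x = 0) :
    ∀ a b : Fin n,
      (((1 : Matrix (Fin n) (Fin n) ℂ) ⊗ₖ T') *
        ((diagonal (fun i => (w₁ i : ℂ)) ⊗ₖ (1 : Matrix (Fin k) (Fin k) ℂ))⁻¹ *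
          (∑ g : G, (Dg g).map Complex.ofReal ⊗ₖ permMat k g)ᵀ *
          (diagonal (fun i => (w₂ i : ℂ)) ⊗ₖ (1 : Matrix (Fin k) (Fin k) ℂ)) *
          (∑ g : G, (Dg g).map Complex.ofReal ⊗ₖ permMat k g)) *
        ((1 : Matrix (Fin n) (Fin n) ℂ) ⊗ₖ T)) (a, ⟨0, hk⟩) (b, ⟨0, hk⟩)
      = ((((diagonal w₁)⁻¹ * Dᵀ * diagonal w₂ * D) a b : ℝ) : ℂ) := by
  intro a b
  have htrivial (gh : G × G) :
      (T' * ((permMat k gh.1)ᵀ * permMat k gh.2) * T) ⟨0, hk⟩ ⟨0, hk⟩ = 1 := by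
    simpa [permMat_transpose_mul] using (hblock (gh.1⁻¹ * gh.2)).1
  rw [inv_kronecker, inv_one, Matrix.kronecker_one_mul_sum_kronecker_transpose_mul_sum_kronecker,
    Matrix.one_kronecker_mul_sum_kronecker_mul_one_kronecker,
    Matrix.sum_kronecker_apply_of_apply_eq_one _ _ _ htrivial]
  have hDc : D.map Complex.ofReal = ∑ g, (Dg g).map Complex.ofReal := by
    rw [hD]; exact map_sum (Complex.ofRealHom.toAddMonoidHom.mapMatrix) _ _
  have hcast : ((diagonal w₁)⁻¹ * Dᵀ * diagonal w₂ * D).map Complex.ofRealHom =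
      (diagonal fun i => (w₁ i : ℂ))⁻¹ * (D.map Complex.ofReal)ᵀ *
        diagonal (fun i => (w₂ i : ℂ)) * D.map Complex.ofReal := by
    simp only [Matrix.map_mul, Matrix.map_inv, transpose_map, diagonal_map (map_zero _)]
    rfl
  rw [Matrix.sum_prod_mul_transpose_mul _ (fun g => (Dg g).map Complex.ofReal) _
    (fun g => (Dg g).map Complex.ofReal), ← hDc, ← hcast]
  rfl

/-- with `D^ψ = Σ_{g∈G} D^g ⊗ P^g` and `D = Σ_g D^g`, the
trivial-representation block of `(W₁ ⊗ I_k)⁻¹ (D^ψ)ᵀ (W₂ ⊗ I_k) D^ψ`, obtained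
by conjugating with `I ⊗ T` where `T` simultaneously block-diagonalizes all
permutation matrices `P^g` with first block the `1×1` identity, equals the base
weighted Laplacian `W₁⁻¹ Dᵀ W₂ D`. -/
theorem trivial_block_of_derived_laplacian {m n k : ℕ} (hk : 0 < k)
    (G : Subgroup (Equiv.Perm (Fin k))) [Fintype ↥G]
    (Dg : G → Matrix (Fin m) (Fin n) ℝ)
    (D : Matrix (Fin m) (Fin n) ℝ) (hD : D = ∑ g : G, Dg g)
    (w₁ : Fin n → ℝ) (w₂ : Fin m → ℝ)
    (hw₁ : ∀ i, 0 < w₁ i) (hw₂ : ∀ i, 0 < w₂ i)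
    (T T' : Matrix (Fin k) (Fin k) ℂ) (hTT' : T * T' = 1) (hT'T : T' * T = 1)
    (hblock : ∀ g : G,
      (T' * permMat k g * T) ⟨0, hk⟩ ⟨0, hk⟩ = 1 ∧
      ∀ x : Fin k, x ≠ ⟨0, hk⟩ →
        (T' * permMat k g * T) x ⟨0, hk⟩ = 0 ∧ (T' * permMat k g * T) ⟨0, hk⟩ x = 0) :
    ∀ a b : Fin n,
      (((1 : Matrix (Fin n) (Fin n) ℂ) ⊗ₖ T') *
        ((diagonal (fun i => (w₁ i : ℂ)) ⊗ₖ (1 : Matrix (Fin k) (Fin k) ℂ))⁻¹ *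
          (∑ g : G, (Dg g).map Complex.ofReal ⊗ₖ permMat k g)ᵀ *
          (diagonal (fun i => (w₂ i : ℂ)) ⊗ₖ (1 : Matrix (Fin k) (Fin k) ℂ)) *
          (∑ g : G, (Dg g).map Complex.ofReal ⊗ₖ permMat k g)) *
        ((1 : Matrix (Fin n) (Fin n) ℂ) ⊗ₖ T)) (a, ⟨0, hk⟩) (b, ⟨0, hk⟩)
      = ((((diagonal w₁)⁻¹ * Dᵀ * diagonal w₂ * D) a b : ℝ) : ℂ) :=
  trivial_block_of_derived_laplacian_general hk G Dg D hD w₁ w₂ T T' hblock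
end

section
/- Let D be an m × n real matrix written as D = D⁺ + D⁻ where D⁺, D⁻ have disjoint supports (no entry position is nonzero in both), let s ∈ {±1} assign sign +1 to entries of D⁺ and −1 to entries of D⁻, and set D^s = D⁺ − D⁻. Let W₁, W₂ be positive diagonal matrices of sizes n and m. Define the 2k-dimensional matrix L = (W₁ ⊗ I₂)⁻¹ (D^ψ)ᵀ (W₂ ⊗ I₂) D^ψ where D^ψ = D⁺ ⊗ I₂ + D⁻ ⊗ P and P = [[0,1],[1,0]]. Then the spectrum of L is the multiset union of the spectrum of W₁⁻¹ Dᵀ W₂ D and the spectrum of W₁⁻¹ (D^s)ᵀ W₂ D^s. -/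
/-!
With `P` the swap matrix, `A ⊗ I₂ + B ⊗ P` is the image of `A + B σ` under the regular
representation of `S₂`, so these matrices multiply like elements of the group algebra: `L` is
again of this form, `L = X ⊗ I₂ + Y ⊗ P`, with `X + Y = W₁⁻¹ Dᵀ W₂ D` and
`X - Y = W₁⁻¹ (D^s)ᵀ W₂ D^s`. In block form `X ⊗ I₂ + Y ⊗ P` is `[[X, Y], [Y, X]]`, and the
unimodular change of basis `[[1, 0], [1, 1]]` turns it into the block upper triangular matrix
`[[X + Y, Y], [0, X - Y]]`.
-/

open Matrix Kronecker

namespace Matrix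

variable {R : Type*} [CommRing R] {l m n : Type*}

def twoFoldLift (A B : Matrix m n R) : Matrix (m × Fin 2) (n × Fin 2) R :=
  A ⊗ₖ 1 + B ⊗ₖ !![0, 1; 1, 0]

theorem twoFoldLift_transpose (A B : Matrix m n R) :
    (twoFoldLift A B)ᵀ = twoFoldLift Aᵀ Bᵀ := by
  have hP : (!![0, 1; 1, 0] : Matrix (Fin 2) (Fin 2) R)ᵀ = !![0, 1; 1, 0] := by
    ext i j; fin_cases i <;> fin_cases j <;> rfl
  rw [twoFoldLift, twoFoldLift, transpose_add, ← kroneckerMap_transpose,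
    ← kroneckerMap_transpose, transpose_one, hP]

theorem twoFoldLift_mul [Fintype m] (A B : Matrix l m R) (C E : Matrix m n R) :
    twoFoldLift A B * twoFoldLift C E = twoFoldLift (A * C + B * E) (A * E + B * C) := by
  have hP : !![(0 : R), 1; 1, 0] * !![0, 1; 1, 0] = 1 := by
    simp [one_fin_two]
  simp only [twoFoldLift, Matrix.mul_add, Matrix.add_mul, ← mul_kronecker_mul, one_mul, mul_one,
    hP, add_kronecker]
  abel

theorem kronecker_one_eq_twoFoldLift (A : Matrix m n R) :
    A ⊗ₖ (1 : Matrix (Fin 2) (Fin 2) R) = twoFoldLift A 0 := by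
  simp [twoFoldLift]

/-- `(i, 0) ↦ inl i` and `(i, 1) ↦ inr i`. -/
def prodFinTwoEquivSum (n : Type*) : n × Fin 2 ≃ n ⊕ n :=
  (Equiv.prodComm n (Fin 2)).trans
    ((finTwoEquiv.prodCongr (Equiv.refl n)).trans (Equiv.boolProdEquivSum n))

theorem reindex_twoFoldLift (A B : Matrix m n R) :
    reindex (prodFinTwoEquivSum m) (prodFinTwoEquivSum n) (twoFoldLift A B) =
      fromBlocks A B B A := by
  ext (i | i) (j | j) <;>
    simp [twoFoldLift, prodFinTwoEquivSum, finTwoEquiv, Equiv.boolProdEquivSum]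

variable [Fintype n] [DecidableEq n]

theorem charpoly_fromBlocks_self (A B : Matrix n n R) :
    (fromBlocks A B B A).charpoly = (A + B).charpoly * (A - B).charpoly := by
  let U : Matrix (n ⊕ n) (n ⊕ n) R := fromBlocks 1 0 1 1
  let U' : Matrix (n ⊕ n) (n ⊕ n) R := fromBlocks 1 0 (-1) 1
  have hU : U' * U = 1 := by simp [U, U', fromBlocks_multiply]
  have hconj : fromBlocks A B B A = U * (fromBlocks (A + B) B 0 (A - B) * U') := by
    simp [U, U', fromBlocks_multiply]
  rw [hconj, charpoly_mul_comm, mul_assoc, hU, mul_one, charpoly_fromBlocks_zero₂₁]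

theorem charpoly_twoFoldLift (A B : Matrix n n R) :
    (twoFoldLift A B).charpoly = (A + B).charpoly * (A - B).charpoly := by
  rw [← charpoly_reindex (prodFinTwoEquivSum n), reindex_twoFoldLift, charpoly_fromBlocks_self]

end Matrix

theorem twofold_spectral_union_matrix_general {m n : ℕ}
    (Dp Dm : Matrix (Fin m) (Fin n) ℝ)
    (D Ds : Matrix (Fin m) (Fin n) ℝ) (hD : D = Dp + Dm) (hDs : Ds = Dp - Dm)
    (w₁ : Fin n → ℝ) (w₂ : Fin m → ℝ) :
    ((diagonal w₁ ⊗ₖ (1 : Matrix (Fin 2) (Fin 2) ℝ))⁻¹ *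
        (Dp ⊗ₖ (1 : Matrix (Fin 2) (Fin 2) ℝ) + Dm ⊗ₖ !![0, 1; 1, 0])ᵀ *
        (diagonal w₂ ⊗ₖ (1 : Matrix (Fin 2) (Fin 2) ℝ)) *
        (Dp ⊗ₖ (1 : Matrix (Fin 2) (Fin 2) ℝ) + Dm ⊗ₖ !![0, 1; 1, 0])).charpoly
      = ((diagonal w₁)⁻¹ * Dᵀ * diagonal w₂ * D).charpoly *
        ((diagonal w₁)⁻¹ * Dsᵀ * diagonal w₂ * Ds).charpoly := by
  have hψ : Dp ⊗ₖ 1 + Dm ⊗ₖ !![0, 1; 1, 0] = twoFoldLift Dp Dm := rfl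
  rw [inv_kronecker, inv_one, hψ, kronecker_one_eq_twoFoldLift, kronecker_one_eq_twoFoldLift,
    twoFoldLift_transpose, twoFoldLift_mul, twoFoldLift_mul, twoFoldLift_mul,
    charpoly_twoFoldLift]
  simp only [Matrix.mul_zero, Matrix.zero_mul, add_zero, zero_add]
  subst hD hDs
  congr 2
  · simp only [transpose_add, Matrix.mul_add, Matrix.add_mul]
    abel
  · simp only [transpose_sub, Matrix.mul_sub, Matrix.sub_mul]
    abel

/-- matrix form of the 2-fold covering spectral union theorem:
write `D = D⁺ + D⁻` with disjoint supports and `D^s = D⁺ − D⁻`, and let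
`D^ψ = D⁺ ⊗ I₂ + D⁻ ⊗ P` with `P = [[0,1],[1,0]]`. Then the spectrum of
`L = (W₁ ⊗ I₂)⁻¹ (D^ψ)ᵀ (W₂ ⊗ I₂) D^ψ` is the multiset union of the spectra of
`W₁⁻¹ Dᵀ W₂ D` and `W₁⁻¹ (D^s)ᵀ W₂ D^s` (expressed via characteristic
polynomials: the charpoly of `L` is the product of the two charpolys). -/
theorem twofold_spectral_union_matrix {m n : ℕ}
    (Dp Dm : Matrix (Fin m) (Fin n) ℝ)
    (hdisj : ∀ i j, Dp i j = 0 ∨ Dm i j = 0)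
    (D Ds : Matrix (Fin m) (Fin n) ℝ) (hD : D = Dp + Dm) (hDs : Ds = Dp - Dm)
    (w₁ : Fin n → ℝ) (w₂ : Fin m → ℝ)
    (hw₁ : ∀ i, 0 < w₁ i) (hw₂ : ∀ i, 0 < w₂ i) :
    ((diagonal w₁ ⊗ₖ (1 : Matrix (Fin 2) (Fin 2) ℝ))⁻¹ *
        (Dp ⊗ₖ (1 : Matrix (Fin 2) (Fin 2) ℝ) + Dm ⊗ₖ !![0, 1; 1, 0])ᵀ *
        (diagonal w₂ ⊗ₖ (1 : Matrix (Fin 2) (Fin 2) ℝ)) *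
        (Dp ⊗ₖ (1 : Matrix (Fin 2) (Fin 2) ℝ) + Dm ⊗ₖ !![0, 1; 1, 0])).charpoly
      = ((diagonal w₁)⁻¹ * Dᵀ * diagonal w₂ * D).charpoly *
        ((diagonal w₁)⁻¹ * Dsᵀ * diagonal w₂ * Ds).charpoly :=
  twofold_spectral_union_matrix_general Dp Dm D Ds hD hDs w₁ w₂
end

section
/- Let φ: K → M be a strong k-fold covering of finite simplicial complexes with weight functions satisfying w_K(F) = w_M(φ(F)) for all faces F of K. Then every eigenvalue of the i-up Laplace operator L_i^up(M) of M is an eigenvalue of the i-up Laplace operator L_i^up(K) of K, with at least the same multiplicity (Spec L_i^up(M) ⊆ Spec L_i^up(K) as multisets, up to inclusion). -/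
open Finset

variable {V : Type*} {W : Type*}

/-- The canonical boundary sign `sgn([F], ∂[Fb])` with respect to the
orientations induced by the linear order on the vertices: it is `(−1)^j` if `F`
is obtained from `Fb` by deleting its `j`-th smallest vertex, and `0` if
`F ∉ ∂ Fb`. -/
def sgnBd [LinearOrder V] (F Fb : Finset V) : ℝ :=
  if F ⊆ Fb ∧ Fb.card = F.card + 1 then
    (-1 : ℝ) ^ (∑ v ∈ Fb \ F, (F.filter (· < v)).card)
  else 0

/-- The matrix of the `i`-up Laplace operator
`L_i^up = W_i⁻¹ D_iᵀ W_{i+1} D_i` of a weighted complex `K`, with rows and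
columns indexed by the `i`-faces of `K`. -/
noncomputable def lapUp [Fintype V] [LinearOrder V]
    (K : Finset (Finset V)) (w : Finset V → ℝ) (i : ℕ) :
    Matrix {F : Finset V // F ∈ K ∧ F.card = i + 1}
      {F : Finset V // F ∈ K ∧ F.card = i + 1} ℝ :=
  fun F F' => (w F.1)⁻¹ *
    ∑ Fb : {B : Finset V // B ∈ K ∧ B.card = i + 2},
      w Fb.1 * sgnBd F.1 Fb.1 * sgnBd F'.1 Fb.1

/-- The matrix of the `i`-up Laplace operator of an incidence-signed complex
`(K, s)`: `L_i^up(K,s) = W_i⁻¹ (D_i^s)ᵀ W_{i+1} D_i^s` where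
`(D_i^s)_{Fb,F} = sgn([F], ∂[Fb]) s(F, Fb)`. -/
noncomputable def lapUpSigned [Fintype V] [LinearOrder V]
    (K : Finset (Finset V)) (w : Finset V → ℝ)
    (s : Finset V → Finset V → ℝ) (i : ℕ) :
    Matrix {F : Finset V // F ∈ K ∧ F.card = i + 1}
      {F : Finset V // F ∈ K ∧ F.card = i + 1} ℝ :=
  fun F F' => (w F.1)⁻¹ *
    ∑ Fb : {B : Finset V // B ∈ K ∧ B.card = i + 2},
      w Fb.1 * (sgnBd F.1 Fb.1 * s F.1 Fb.1) * (sgnBd F'.1 Fb.1 * s F'.1 Fb.1)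

/-- The matrix of the `i`-down Laplace operator
`L_i^down = D_{i-1} W_{i-1}⁻¹ D_{i-1}ᵀ W_i` of a weighted complex `K`
(the `(i-1)`-faces have cardinality `i`; for `i = 0` this is the empty
simplex, giving the augmented/reduced version). -/
noncomputable def lapDown [Fintype V] [LinearOrder V]
    (K : Finset (Finset V)) (w : Finset V → ℝ) (i : ℕ) :
    Matrix {F : Finset V // F ∈ K ∧ F.card = i + 1}
      {F : Finset V // F ∈ K ∧ F.card = i + 1} ℝ :=
  fun F F' =>
    (∑ H : {H : Finset V // H ∈ K ∧ H.card = i},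
      sgnBd H.1 F.1 * (w H.1)⁻¹ * sgnBd H.1 F'.1) * w F'.1

/-- The sign `sgn([F], [φ(F)])` comparing the canonical orientation of a face
`F` with the orientation its image `φ(F)` inherits from `φ`: it is the sign of
the permutation sorting the `φ`-image of the sorted vertex list of `F`,
computed as the parity of the number of inversions. -/
def sgnMap {W : Type*} [LinearOrder V] [LinearOrder W] (φ : V → W) (F : Finset V) : ℝ :=
  (-1 : ℝ) ^ ((F ×ˢ F).filter fun p => p.1 < p.2 ∧ φ p.2 < φ p.1).card


/-!
Let `φ^*` send an `i`-cochain `g` of `M` to the cochain `F ↦ sgn([F], [φ(F)]) g(φ(F))` of `K`.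
Every face of `M` has a preimage, so `φ^*` is injective. Relabelling the vertices of a face
through `φ` multiplies the boundary signs by the two orientation signs, and with this `φ^*`
commutes with the coboundary and with its weighted adjoint; hence
`L_i^up(K) φ^* = φ^* L_i^up(M)`. So the image of `φ^*` is an `L_i^up(K)`-invariant subspace on
which `L_i^up(K)` acts as `L_i^up(M)`, and the characteristic polynomial of the restriction of a
linear map to an invariant subspace divides that of the map.
-/

open Matrix

theorem LinearMap.charpoly_restrict_dvd {K E : Type*} [Field K] [AddCommGroup E] [Module K E]
    [FiniteDimensional K E] (f : E →ₗ[K] E) {p : Submodule K E} (hp : ∀ x ∈ p, f x ∈ p) :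
    (f.restrict hp).charpoly ∣ f.charpoly := by
  obtain ⟨q, hpq⟩ := p.exists_isCompl
  let e := p.prodEquivOfIsCompl q hpq
  let bp := Module.finBasis K p
  let b := (bp.prod (Module.finBasis K q)).map e
  have hcol : ∀ x : p, e.symm (f (e (x, 0))) = (f.restrict hp x, 0) := fun x => by
    simpa [e] using Submodule.prodEquivOfIsCompl_symm_apply_left p q hpq (f.restrict hp x)
  have h11 :
      (LinearMap.toMatrix b b f).toBlocks₁₁ = LinearMap.toMatrix bp bp (f.restrict hp) := by
    ext i j
    simp [toBlocks₁₁, LinearMap.toMatrix_apply, b, hcol]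
  have h21 : (LinearMap.toMatrix b b f).toBlocks₂₁ = 0 := by
    ext i j
    simp [toBlocks₂₁, LinearMap.toMatrix_apply, b, hcol]
  rw [← LinearMap.charpoly_toMatrix f b, ← fromBlocks_toBlocks (LinearMap.toMatrix b b f), h11,
    h21, charpoly_fromBlocks_zero₂₁, LinearMap.charpoly_toMatrix]
  exact dvd_mul_right _ _

theorem Matrix.charpoly_dvd_of_mul_eq_mul {K m n : Type*} [Field K] [Fintype m] [DecidableEq m]
    [Fintype n] [DecidableEq n] {A : Matrix n n K} {B : Matrix m m K} {T : Matrix n m K}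
    (hT : Function.Injective (toLin' T)) (h : A * T = T * B) : B.charpoly ∣ A.charpoly := by
  have hp : ∀ x ∈ LinearMap.range (toLin' T), toLin' A x ∈ LinearMap.range (toLin' T) := by
    rintro _ ⟨v, rfl⟩
    exact ⟨toLin' B v, by rw [← toLin'_mul_apply, ← h, toLin'_mul_apply]⟩
  let e := LinearEquiv.ofInjective _ hT
  have hconj : e.conj (toLin' B) = (toLin' A).restrict hp := by
    ext x
    obtain ⟨v, rfl⟩ := e.surjective x
    simp [e, LinearEquiv.conj_apply, h]
  rw [← charpoly_toLin' A, ← charpoly_toLin' B, ← LinearEquiv.charpoly_conj e, hconj]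
  exact (toLin' A).charpoly_restrict_dvd hp

theorem Finset.pow_card_filter {α M : Type*} [CommMonoid M] (s : Finset α) (p : α → Prop)
    [DecidablePred p] (a : M) : a ^ #(s.filter p) = ∏ x ∈ s, if p x then a else 1 := by
  rw [prod_ite, prod_const, prod_const_one, mul_one]

section Signs

variable [LinearOrder V] [LinearOrder W]

lemma sgnBd_of_not_subset {F Fb : Finset V} (h : ¬F ⊆ Fb) : sgnBd F Fb = 0 :=
  if_neg fun h' => h h'.1

lemma sgnBd_insert {v : V} {F : Finset V} (hv : v ∉ F) :
    sgnBd F (insert v F) = ∏ u ∈ F, if u < v then -1 else 1 := by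
  rw [sgnBd, if_pos ⟨subset_insert v F, card_insert_of_notMem hv⟩, insert_sdiff_cancel hv,
    sum_singleton, pow_card_filter]

lemma sgnMap_eq_prod (φ : V → W) (F : Finset V) :
    sgnMap φ F = ∏ a ∈ F, ∏ b ∈ F, if a < b ∧ φ b < φ a then -1 else 1 := by
  rw [sgnMap, pow_card_filter, prod_product]

lemma sgnMap_mul_self (φ : V → W) (F : Finset V) : sgnMap φ F * sgnMap φ F = 1 := by
  rw [sgnMap, ← pow_add, ← two_mul, pow_mul, neg_one_sq, one_pow]

lemma sgnMap_ne_zero (φ : V → W) (F : Finset V) : sgnMap φ F ≠ 0 :=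
  pow_ne_zero _ (by norm_num)

lemma sgnMap_insert (φ : V → W) {v : V} {F : Finset V} (hv : v ∉ F) :
    sgnMap φ (insert v F) = sgnMap φ F *
      ∏ u ∈ F, ((if u < v ∧ φ v < φ u then -1 else 1) *
        (if v < u ∧ φ u < φ v then -1 else 1)) := by
  simp only [sgnMap_eq_prod, prod_insert hv, lt_irrefl, false_and, if_false, one_mul,
    prod_mul_distrib]
  ring

lemma sgnBd_image (φ : V → W) {F Fb : Finset V} (hsub : F ⊆ Fb) (hcard : #Fb = #F + 1)
    (hinj : Set.InjOn φ Fb) :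
    sgnBd (F.image φ) (Fb.image φ) = sgnBd F Fb * (sgnMap φ F * sgnMap φ Fb) := by
  obtain ⟨v, hv, rfl⟩ := exists_eq_insert_iff.mpr ⟨hsub, hcard.symm⟩
  have hinjF : Set.InjOn φ F := hinj.mono (by simp)
  have hne : ∀ u ∈ F, u ≠ v ∧ φ u ≠ φ v := fun u hu =>
    ⟨ne_of_mem_of_not_mem hu hv, fun h => hv (hinj (by simp [hu]) (by simp) h ▸ hu)⟩
  have hφv : φ v ∉ F.image φ := by
    simp only [mem_image, not_exists, not_and]
    exact fun u hu h => (hne u hu).2 h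
  have hsign : ∀ u ∈ F, (if φ u < φ v then (-1 : ℝ) else 1) = (if u < v then -1 else 1) *
      ((if u < v ∧ φ v < φ u then -1 else 1) * (if v < u ∧ φ u < φ v then -1 else 1)) := by
    intro u hu
    rcases (hne u hu).1.lt_or_gt with h | h <;> rcases (hne u hu).2.lt_or_gt with h' | h' <;>
      simp [h, h', h.not_gt, h'.not_gt]
  rw [image_insert, sgnBd_insert hφv, prod_image hinjF, prod_congr rfl hsign, prod_mul_distrib,
    sgnBd_insert hv, sgnMap_insert φ hv]
  linear_combination (-((∏ u ∈ F, if u < v then (-1 : ℝ) else 1) *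
    ∏ u ∈ F, ((if u < v ∧ φ v < φ u then (-1 : ℝ) else 1) *
      (if v < u ∧ φ u < φ v then -1 else 1)))) * sgnMap_mul_self φ F

end Signs

abbrev Face (K : Finset (Finset V)) (n : ℕ) := {F : Finset V // F ∈ K ∧ #F = n}

section Coboundary

variable [Fintype V] [LinearOrder V]

def coboundary (K : Finset (Finset V)) (i : ℕ) : Matrix (Face K (i + 2)) (Face K (i + 1)) ℝ :=
  of fun Fb F => sgnBd F.1 Fb.1

lemma lapUp_eq_mul (K : Finset (Finset V)) (w : Finset V → ℝ) (i : ℕ) :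
    lapUp K w i = diagonal (fun F : Face K (i + 1) => (w F.1)⁻¹) * (coboundary K i)ᵀ *
      diagonal (fun Fb : Face K (i + 2) => w Fb.1) * coboundary K i := by
  ext F F'
  rw [Matrix.mul_assoc, Matrix.mul_assoc, diagonal_mul, mul_apply]
  simp only [lapUp, diagonal_mul, coboundary, of_apply, transpose_apply]
  congr 1
  exact sum_congr rfl fun _ _ => by ring

end Coboundary

namespace StrongCovering

variable [LinearOrder V] [LinearOrder W] {K : Finset (Finset V)} {M : Finset (Finset W)}
  {φ : V → W}

lemma eq_of_image_eq_of_subset (hc : StrongCovering K M φ) {Fb F F' : Finset V} (hFb : Fb ∈ K)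
    (hF : F ⊆ Fb) (hF' : F' ⊆ Fb) (h : F.image φ = F'.image φ) : F = F' := by
  rw [← coe_inj, ← (hc.injOn Fb hFb).image_eq_image_iff (by simpa) (by simpa)]
  exact_mod_cast h

lemma eq_of_image_eq_of_superset (hc : StrongCovering K M φ) {F Fb Fb' : Finset V}
    (hFb : Fb ∈ K) (hFb' : Fb' ∈ K) (hF : F.Nonempty) (h : F ⊆ Fb) (h' : F ⊆ Fb')
    (himg : Fb.image φ = Fb'.image φ) : Fb = Fb' := by
  by_contra hne
  obtain ⟨u, hu⟩ := hF
  exact disjoint_left.1 (hc.disjointFibers Fb hFb Fb' hFb' himg hne) (h hu) (h' hu)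

variable (hc : StrongCovering K M φ)

def faceImage {n : ℕ} (F : Face K n) : Face M n :=
  ⟨F.1.image φ, hc.simplicial F.1 F.2.1,
    by rw [card_image_of_injOn (hc.injOn F.1 F.2.1), F.2.2]⟩

@[simp]
lemma coe_faceImage {n : ℕ} (F : Face K n) : (hc.faceImage F).1 = F.1.image φ := rfl

lemma faceImage_surjective (n : ℕ) : Function.Surjective (hc.faceImage (n := n)) := by
  intro G
  obtain ⟨F, hF, himg⟩ := hc.surjFaces G.1 G.2.1
  refine ⟨⟨F, hF, ?_⟩, Subtype.ext himg⟩
  rw [← card_image_of_injOn (hc.injOn F hF), himg, G.2.2]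

def pullback (n : ℕ) : Matrix (Face K n) (Face M n) ℝ :=
  of fun F G => if hc.faceImage F = G then sgnMap φ F.1 else 0

lemma pullback_apply_faceImage {n : ℕ} (F : Face K n) :
    hc.pullback n F (hc.faceImage F) = sgnMap φ F.1 :=
  if_pos rfl

lemma pullback_apply_of_ne {n : ℕ} {F : Face K n} {G : Face M n} (h : hc.faceImage F ≠ G) :
    hc.pullback n F G = 0 :=
  if_neg h

variable [Fintype W]

lemma sum_pullback_mul {n : ℕ} (F : Face K n) (f : Face M n → ℝ) :
    ∑ G, hc.pullback n F G * f G = sgnMap φ F.1 * f (hc.faceImage F) := by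
  simp [pullback, of_apply, ite_mul]

lemma pullback_injective (n : ℕ) : Function.Injective (toLin' (hc.pullback n)) := by
  rw [← LinearMap.ker_eq_bot, LinearMap.ker_eq_bot']
  intro x hx
  ext G
  obtain ⟨F, rfl⟩ := hc.faceImage_surjective n G
  have hF := congr_fun hx F
  rw [toLin'_apply, mulVec, dotProduct, sum_pullback_mul] at hF
  exact (mul_eq_zero.1 hF).resolve_left (sgnMap_ne_zero φ F.1)

variable [Fintype V]

lemma diagonal_mul_pullback {n : ℕ} (f : Finset V → ℝ) (g : Finset W → ℝ)
    (hfg : ∀ F ∈ K, f F = g (F.image φ)) :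
    diagonal (fun F : Face K n => f F.1) * hc.pullback n =
      hc.pullback n * diagonal (fun G : Face M n => g G.1) := by
  ext F G
  rw [diagonal_mul, mul_diagonal]
  simp only [pullback, of_apply]
  split_ifs with h
  · rw [← h, hfg F.1 F.2.1, mul_comm]
    rfl
  · simp

/-- An `(i+1)`-face `Fb` of `K` has exactly one `i`-face over each `i`-face of `φ(Fb)`, and none
over any other `i`-face of `M`. -/
lemma coboundary_mul_pullback (i : ℕ) :
    coboundary K i * hc.pullback (i + 1) = hc.pullback (i + 2) * coboundary M i := by
  ext Fb G
  simp only [mul_apply, coboundary, of_apply, sum_pullback_mul, coe_faceImage]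
  by_cases hG : G.1 ⊆ Fb.1.image φ
  · obtain ⟨F, hsub, himg⟩ := subset_image_iff.1 hG
    have hinj := hc.injOn Fb.1 Fb.2.1
    have hcard : #F = i + 1 := by
      rw [← card_image_of_injOn (hinj.mono (by simpa)), himg, G.2.2]
    let F' : Face K (i + 1) := ⟨F, hc.complexK Fb.1 Fb.2.1 F hsub, hcard⟩
    have hF' : hc.faceImage F' = G := Subtype.ext himg
    rw [Fintype.sum_eq_single F']
    · rw [← hF', pullback_apply_faceImage, coe_faceImage,
        sgnBd_image φ hsub (by rw [Fb.2.2, hcard]) hinj]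
      linear_combination (-(sgnBd F Fb.1 * sgnMap φ F)) * sgnMap_mul_self φ Fb.1
    · intro F'' hne
      by_cases hsub'' : F''.1 ⊆ Fb.1
      · have : hc.faceImage F'' ≠ G := fun h => hne <| Subtype.ext <|
          hc.eq_of_image_eq_of_subset Fb.2.1 hsub'' hsub
            (congrArg Subtype.val (h.trans hF'.symm))
        rw [hc.pullback_apply_of_ne this, mul_zero]
      · rw [sgnBd_of_not_subset hsub'', zero_mul]
  · rw [sgnBd_of_not_subset hG, mul_zero]
    refine sum_eq_zero fun F _ => ?_
    by_cases hsub : F.1 ⊆ Fb.1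
    · have : hc.faceImage F ≠ G := fun h => hG (h ▸ image_subset_image hsub)
      rw [hc.pullback_apply_of_ne this, mul_zero]
    · rw [sgnBd_of_not_subset hsub, zero_mul]

/-- An `i`-face `F` of `K` lies in exactly one `(i+1)`-face over each `(i+1)`-face of `M`
containing `φ(F)`: it exists because incidences lift, and it is unique because the fibres of
`φ` are disjoint. -/
lemma coboundary_transpose_mul_pullback (i : ℕ) :
    (coboundary K i)ᵀ * hc.pullback (i + 2) = hc.pullback (i + 1) * (coboundary M i)ᵀ := by
  ext F Gb
  simp only [mul_apply, transpose_apply, coboundary, of_apply, sum_pullback_mul, coe_faceImage]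
  by_cases hG : F.1.image φ ⊆ Gb.1
  · obtain ⟨Fb, hFbK, hsub, hcard, himg⟩ :=
      hc.strong _ (hc.simplicial F.1 F.2.1) Gb.1 Gb.2.1 hG
        (by rw [Gb.2.2, card_image_of_injOn (hc.injOn F.1 F.2.1), F.2.2]) F.1 F.2.1 rfl
    let Fb' : Face K (i + 2) := ⟨Fb, hFbK, by rw [hcard, F.2.2]⟩
    have hFb' : hc.faceImage Fb' = Gb := Subtype.ext himg
    rw [Fintype.sum_eq_single Fb']
    · rw [← hFb', pullback_apply_faceImage, coe_faceImage,
        sgnBd_image φ hsub hcard (hc.injOn Fb hFbK)]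
      linear_combination (-(sgnBd F.1 Fb * sgnMap φ Fb)) * sgnMap_mul_self φ F.1
    · intro Fb'' hne
      by_cases hsub'' : F.1 ⊆ Fb''.1
      · have hF : F.1.Nonempty := card_pos.1 (by rw [F.2.2]; omega)
        have : hc.faceImage Fb'' ≠ Gb := fun h => hne <| Subtype.ext <|
          hc.eq_of_image_eq_of_superset Fb''.2.1 hFbK hF hsub'' hsub
            (congrArg Subtype.val (h.trans hFb'.symm))
        rw [hc.pullback_apply_of_ne this, mul_zero]
      · rw [sgnBd_of_not_subset hsub'', zero_mul]
  · rw [sgnBd_of_not_subset hG, mul_zero]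
    refine sum_eq_zero fun Fb _ => ?_
    by_cases hsub : F.1 ⊆ Fb.1
    · have : hc.faceImage Fb ≠ Gb := fun h => hG (h ▸ image_subset_image hsub)
      rw [hc.pullback_apply_of_ne this, mul_zero]
    · rw [sgnBd_of_not_subset hsub, zero_mul]

lemma lapUp_mul_pullback {wK : Finset V → ℝ} {wM : Finset W → ℝ}
    (hw : ∀ F ∈ K, wK F = wM (F.image φ)) (i : ℕ) :
    lapUp K wK i * hc.pullback (i + 1) = hc.pullback (i + 1) * lapUp M wM i := by
  have hw' : ∀ F ∈ K, (wK F)⁻¹ = (wM (F.image φ))⁻¹ := fun F hF => by rw [hw F hF]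
  simp only [lapUp_eq_mul, Matrix.mul_assoc, coboundary_mul_pullback]
  rw [← Matrix.mul_assoc (diagonal _) (hc.pullback _), hc.diagonal_mul_pullback _ _ hw,
    Matrix.mul_assoc, ← Matrix.mul_assoc _ (hc.pullback _), coboundary_transpose_mul_pullback,
    Matrix.mul_assoc, ← Matrix.mul_assoc (diagonal _),
    hc.diagonal_mul_pullback (fun F => (wK F)⁻¹) (fun G => (wM G)⁻¹) hw']
  simp only [Matrix.mul_assoc]

end StrongCovering

theorem spectral_inclusion_up_laplacian_general [Fintype V] [LinearOrder V]
    [Fintype W] [LinearOrder W]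
    (K : Finset (Finset V)) (M : Finset (Finset W)) (φ : V → W)
    (hc : StrongCovering K M φ)
    (wK : Finset V → ℝ) (wM : Finset W → ℝ)
    (hw : ∀ F ∈ K, wK F = wM (F.image φ))
    (i : ℕ) :
    (lapUp M wM i).charpoly ∣ (lapUp K wK i).charpoly :=
  charpoly_dvd_of_mul_eq_mul (hc.pullback_injective (i + 1)) (hc.lapUp_mul_pullback hw i)

/-- spectral inclusion: for a strong `k`-fold covering
`φ : K → M` of weighted complexes with `w_K(F) = w_M(φ(F))`, every eigenvalue
of `L_i^up(M)` is an eigenvalue of `L_i^up(K)` with at least the same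
multiplicity; i.e. the characteristic polynomial of `L_i^up(M)` divides that of
`L_i^up(K)`. -/
theorem spectral_inclusion_up_laplacian [Fintype V] [LinearOrder V]
    [Fintype W] [LinearOrder W]
    (K : Finset (Finset V)) (M : Finset (Finset W)) (φ : V → W)
    (hc : StrongCovering K M φ)
    (k : ℕ) (hk : 0 < k)
    (hfold : ∀ G ∈ M, (K.filter fun F => F.card = G.card ∧ F.image φ = G).card = k)
    (wK : Finset V → ℝ) (wM : Finset W → ℝ)
    (hwM : ∀ G ∈ M, 0 < wM G)
    (hw : ∀ F ∈ K, wK F = wM (F.image φ))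
    (i : ℕ) :
    (lapUp M wM i).charpoly ∣ (lapUp K wK i).charpoly :=
  spectral_inclusion_up_laplacian_general K M φ hc wK wM hw i
end
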